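/- Let G be a connected loopless directed multigraph on vertex set {1,…,n+1} with m edges, each edge directed from its smaller endpoint to its larger endpoint, such that every vertex i ∈ {1,…,n} has out-degree at least 1. For i ∈ {1,…,n} set u_i = (in-degree of i) − 1 (an integer, possibly −1). For a positive integer x, let E_G(x) denote the number of assignments of nonnegative integers to the edges of G such that at every vertex i ∈ {1,…,n} the total flow on edges leaving i minus the total flow on edges entering i equals x + u_i. Then there exists a polynomial P of degree exactly m − n with nonnegative rational coefficients such that E_G(x) = P(x) for every positive integer x. -/

import Mathlib

/-!
Count an edge carrying `c` units as `c` at its tail and `c + 1` at its head; the flows counted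
by `E_G(x)` are then those with net flow `x - 1` at every inner vertex. Let the edges `(a, i)`
and `(i, c)` at an inner vertex `i` carry `p` and `q`. Flows with `q ≤ p` correspond to flows of
the graph with `(i, c)` rerouted to `(a, c)`, carrying `p - q` and `q`; flows with `p < q` to flows
of the graph with `(a, i)` rerouted to `(a, c)`, carrying `p` and `q - p - 1`. Iterating, all
edges end at the sink, where the flows split into independent stars-and-bars problems: a vertex
with `d` outgoing edges contributes `multichoose d (x - 1) = multichoose x (d - 1)`, a polynomial
of degree `d - 1` in `x` with nonnegative coefficients. Counting with polynomials over `ℚ≥0`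
rules out cancellation. The second branch keeps every inner vertex a tail, so the degree `m - n`
survives; if the first branch leaves `i` without outgoing edges, that graph has no flows at all.
-/

open Finset Polynomial

lemma Nat.multichoose_succ_comm (a b : ℕ) :
    Nat.multichoose (a + 1) b = Nat.multichoose (b + 1) a := by
  rw [Nat.multichoose_eq, Nat.multichoose_eq, add_right_comm, Nat.add_sub_cancel,
    add_right_comm, Nat.add_sub_cancel, add_comm, Nat.choose_symm_add]

lemma Fintype.sum_eq_sum_of_eq_off_pair {ι M : Type*} [Fintype ι] [AddCommGroup M]
    {f g : ι → M} {a b : ι} (hab : a ≠ b) (hoff : ∀ e, e ≠ a ∧ e ≠ b → f e = g e)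
    (hpair : f a + f b = g a + g b) : ∑ e, f e = ∑ e, g e := by
  rw [← sub_eq_zero, ← Finset.sum_sub_distrib,
    Fintype.sum_eq_add a b hab fun e he => sub_eq_zero.2 (hoff e he), sub_add_sub_comm, hpair,
    sub_self]

lemma Polynomial.degree_add_eq_right_of_degree_le {R : Type*} [Semiring R]
    [Subsingleton (AddUnits R)] {p q : R[X]} (h : p.degree ≤ q.degree) :
    (p + q).degree = q.degree := by
  by_cases hq : q = 0
  · simp_all
  · rw [degree_add_eq_of_leadingCoeff_add_ne_zero, max_eq_right h]
    exact fun h0 => hq (leadingCoeff_eq_zero.1 (add_eq_zero.1 h0).2)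

namespace FlowCount

noncomputable def multichoosePoly (k : ℕ) : ℚ≥0[X] :=
  C (k.factorial : ℚ≥0)⁻¹ * ascPochhammer ℚ≥0 k

lemma eval_multichoosePoly (k x : ℕ) :
    (multichoosePoly k).eval (x : ℚ≥0) = Nat.multichoose x k := by
  rw [multichoosePoly, eval_mul, eval_C, ← ascPochhammer_eval_cast,
    ascPochhammer_nat_eq_ascFactorial, Nat.ascFactorial_eq_factorial_mul_choose',
    ← Nat.multichoose_eq]
  push_cast
  rw [inv_mul_cancel_left₀ (by positivity)]

lemma degree_multichoosePoly (k : ℕ) : (multichoosePoly k).degree = k := by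
  rw [multichoosePoly, degree_C_mul (by positivity),
    degree_eq_natDegree (monic_ascPochhammer _ _).ne_zero, ascPochhammer_natDegree]

variable {ι : Type*}

section Splitting

variable [DecidableEq ι] {a b : ι}

def splitByComparison (hab : a ≠ b) : (ι → ℕ) ⊕ (ι → ℕ) ≃ (ι → ℕ) where
  toFun := Sum.elim (fun c => Function.update c a (c a + c b))
    (fun c => Function.update c b (c a + c b + 1))
  invFun f := if f b ≤ f a then .inl (Function.update f a (f a - f b))
    else .inr (Function.update f b (f b - f a - 1))
  left_inv := by
    rintro (c | c)
    · simp [Function.update_of_ne hab.symm]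
    · simp only [Sum.elim_inr, Function.update_self, Function.update_of_ne hab,
        Function.update_idem]
      simp only [show ¬ c a + c b + 1 ≤ c a by omega, if_false, Function.update_eq_self,
        show c a + c b + 1 - c a - 1 = c b by omega]
  right_inv f := by
    by_cases h : f b ≤ f a
    · simp [h, Function.update_of_ne hab.symm]
    · simp [h, Function.update_of_ne hab]
      omega

@[simp]
lemma splitByComparison_inl (hab : a ≠ b) (c : ι → ℕ) :
    splitByComparison hab (.inl c) = Function.update c a (c a + c b) := rfl

@[simp]
lemma splitByComparison_inr (hab : a ≠ b) (c : ι → ℕ) :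
    splitByComparison hab (.inr c) = Function.update c b (c a + c b + 1) := rfl

end Splitting

noncomputable def fiberwiseSumEquiv [Fintype ι] [DecidableEq ι] {κ : Type*} [DecidableEq κ]
    (f : ι → κ) (k : ℕ) :
    {b : ι → ℕ // ∀ v, ∑ e with f e = v, b e = k} ≃ ∀ v, Sym {e // f e = v} k :=
  (Equiv.subtypeEquiv (Equiv.piCongrFiberwise fun _ => Equiv.refl _) fun _ =>
      forall_congr' fun _ => by
        rw [Finset.sum_subtype _ fun _ => Finset.mem_filter_univ _]; rfl).trans <|
    Equiv.subtypePiEquivPi.trans <|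
      Equiv.piCongrRight fun _ => (Sym.equivNatSumOfFintype _ k).symm

variable {n : ℕ}

section Reroute

variable [DecidableEq ι] (edges : ι → Fin (n + 1) × Fin (n + 1)) (eIn eOut : ι)

def rerouteOut : ι → Fin (n + 1) × Fin (n + 1) :=
  Function.update edges eOut ((edges eIn).1, (edges eOut).2)

def rerouteIn : ι → Fin (n + 1) × Fin (n + 1) :=
  Function.update edges eIn ((edges eIn).1, (edges eOut).2)

variable {edges eIn eOut}

lemma rerouteIn_fst (e : ι) : (rerouteIn edges eIn eOut e).1 = (edges e).1 := by
  rcases eq_or_ne e eIn with rfl | he <;> simp [rerouteIn, Function.update_of_ne, *]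

lemma rerouteOut_snd (e : ι) : (rerouteOut edges eIn eOut e).2 = (edges e).2 := by
  rcases eq_or_ne e eOut with rfl | he <;> simp [rerouteOut, Function.update_of_ne, *]

lemma rerouteOut_fst_of_ne {e : ι} (he : e ≠ eOut) :
    (rerouteOut edges eIn eOut e).1 = (edges e).1 := by
  simp [rerouteOut, Function.update_of_ne he]

lemma fst_lt_snd_update (hdir : ∀ e, (edges e).1 < (edges e).2) (e₀ : ι)
    {p : Fin (n + 1) × Fin (n + 1)} (hp : p.1 < p.2) (e : ι) :
    (Function.update edges e₀ p e).1 < (Function.update edges e₀ p e).2 := by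
  rcases eq_or_ne e e₀ with rfl | he
  · simpa using hp
  · simpa [Function.update_of_ne he] using hdir e

lemma fst_lt_snd_rerouteIn (hdir : ∀ e, (edges e).1 < (edges e).2)
    (hjoin : (edges eIn).2 = (edges eOut).1) (e : ι) :
    (rerouteIn edges eIn eOut e).1 < (rerouteIn edges eIn eOut e).2 :=
  fst_lt_snd_update hdir eIn (p := ((edges eIn).1, (edges eOut).2))
    (((hdir eIn).trans_eq hjoin).trans (hdir eOut)) e

lemma fst_lt_snd_rerouteOut (hdir : ∀ e, (edges e).1 < (edges e).2)
    (hjoin : (edges eIn).2 = (edges eOut).1) (e : ι) :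
    (rerouteOut edges eIn eOut e).1 < (rerouteOut edges eIn eOut e).2 :=
  fst_lt_snd_update hdir eOut (p := ((edges eIn).1, (edges eOut).2))
    (((hdir eIn).trans_eq hjoin).trans (hdir eOut)) e

end Reroute

def edgeNetFlow (p : Fin (n + 1) × Fin (n + 1)) (c : ℤ) (v : Fin (n + 1)) : ℤ :=
  c * (if p.1 = v then 1 else 0) - (c + 1) * (if p.2 = v then 1 else 0)

variable [Fintype ι]

def shiftedNetFlow (edges : ι → Fin (n + 1) × Fin (n + 1)) (b : ι → ℕ) (v : Fin (n + 1)) :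
    ℤ :=
  ∑ e, edgeNetFlow (edges e) (b e) v

def IsShiftedFlow (edges : ι → Fin (n + 1) × Fin (n + 1)) (x : ℕ) (b : ι → ℕ) : Prop :=
  ∀ v : Fin (n + 1), (v : ℕ) < n → shiftedNetFlow edges b v = x - 1

def CountsShiftedFlows (edges : ι → Fin (n + 1) × Fin (n + 1)) (Q : ℚ≥0[X]) : Prop :=
  ∀ x, 0 < x → Finite {b // IsShiftedFlow edges x b} ∧
    (Nat.card {b // IsShiftedFlow edges x b} : ℚ≥0) = Q.eval (x : ℚ≥0)

def potential (edges : ι → Fin (n + 1) × Fin (n + 1)) : ℕ :=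
  ∑ e, ((edges e).1 + (n - (edges e).2) : ℕ)

section Net

variable {edges : ι → Fin (n + 1) × Fin (n + 1)}

lemma shiftedNetFlow_eq (b : ι → ℕ) (v : Fin (n + 1)) :
    shiftedNetFlow edges b v = ∑ e with (edges e).1 = v, (b e : ℤ) -
      ∑ e with (edges e).2 = v, (b e : ℤ) - #{e | (edges e).2 = v} := by
  rw [Finset.sum_filter, Finset.sum_filter, Finset.card_filter, Nat.cast_sum, sub_sub,
    ← Finset.sum_add_distrib, ← Finset.sum_sub_distrib]
  refine Finset.sum_congr rfl fun e _ => ?_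
  simp only [edgeNetFlow]
  split_ifs <;> push_cast <;> ring

lemma isShiftedFlow_iff (x : ℕ) (b : ι → ℕ) :
    IsShiftedFlow edges x b ↔ ∀ v : Fin (n + 1), (v : ℕ) < n →
      ∑ e with (edges e).1 = v, (b e : ℤ) - ∑ e with (edges e).2 = v, (b e : ℤ) =
        x + ((#{e | (edges e).2 = v} : ℤ) - 1) :=
  forall₂_congr fun v _ => by rw [shiftedNetFlow_eq]; omega

lemma shiftedNetFlow_neg {v : Fin (n + 1)} (hin : ∃ e, (edges e).2 = v)
    (hnout : ∀ e, (edges e).1 ≠ v) (b : ι → ℕ) : shiftedNetFlow edges b v < 0 := by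
  obtain ⟨e₀, he₀⟩ := hin
  rw [← neg_pos, shiftedNetFlow, ← Finset.sum_neg_distrib]
  refine Finset.sum_pos' (fun e _ => ?_) ⟨e₀, mem_univ _, ?_⟩
  · simp only [edgeNetFlow, if_neg (hnout e)]
    split_ifs <;> omega
  · simp only [edgeNetFlow, if_neg (hnout e₀), if_pos he₀]
    omega

lemma countsShiftedFlows_zero {v : Fin (n + 1)} (hv : (v : ℕ) < n)
    (hin : ∃ e, (edges e).2 = v) (hnout : ∀ e, (edges e).1 ≠ v) :
    CountsShiftedFlows edges 0 := by
  intro x hx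
  have : IsEmpty {b // IsShiftedFlow edges x b} :=
    ⟨fun b => by have := b.2 v hv; have := shiftedNetFlow_neg hin hnout b.1; omega⟩
  exact ⟨inferInstance, by simp⟩

end Net

section RerouteFlows

variable [DecidableEq ι] {edges : ι → Fin (n + 1) × Fin (n + 1)} {eIn eOut : ι}

lemma shiftedNetFlow_rerouteOut (hne : eIn ≠ eOut) (hjoin : (edges eIn).2 = (edges eOut).1)
    (c : ι → ℕ) (v : Fin (n + 1)) :
    shiftedNetFlow (rerouteOut edges eIn eOut) c v =
      shiftedNetFlow edges (splitByComparison hne (.inl c)) v := by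
  refine Fintype.sum_eq_sum_of_eq_off_pair hne (fun e he => ?_) ?_
  · simp [rerouteOut, Function.update_of_ne he.1, Function.update_of_ne he.2]
  · simp only [splitByComparison_inl, rerouteOut, Function.update_self,
      Function.update_of_ne hne, Function.update_of_ne hne.symm, edgeNetFlow, hjoin]
    split_ifs <;> push_cast <;> ring

lemma shiftedNetFlow_rerouteIn (hne : eIn ≠ eOut) (hjoin : (edges eIn).2 = (edges eOut).1)
    (c : ι → ℕ) (v : Fin (n + 1)) :
    shiftedNetFlow (rerouteIn edges eIn eOut) c v =
      shiftedNetFlow edges (splitByComparison hne (.inr c)) v := by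
  refine Fintype.sum_eq_sum_of_eq_off_pair hne (fun e he => ?_) ?_
  · simp [rerouteIn, Function.update_of_ne he.1, Function.update_of_ne he.2]
  · simp only [splitByComparison_inr, rerouteIn, Function.update_self,
      Function.update_of_ne hne, Function.update_of_ne hne.symm, edgeNetFlow, hjoin]
    split_ifs <;> push_cast <;> ring

def shiftedFlowEquivSum (hne : eIn ≠ eOut) (hjoin : (edges eIn).2 = (edges eOut).1) (x : ℕ) :
    {c // IsShiftedFlow (rerouteOut edges eIn eOut) x c} ⊕
      {c // IsShiftedFlow (rerouteIn edges eIn eOut) x c} ≃ {b // IsShiftedFlow edges x b} :=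
  (Equiv.subtypeSum (p := Sum.elim (IsShiftedFlow (rerouteOut edges eIn eOut) x)
    (IsShiftedFlow (rerouteIn edges eIn eOut) x))).symm.trans <|
    Equiv.subtypeEquiv (splitByComparison hne) <| by
      rintro (c | c) <;>
        simp only [Sum.elim_inl, Sum.elim_inr, IsShiftedFlow,
          shiftedNetFlow_rerouteOut hne hjoin, shiftedNetFlow_rerouteIn hne hjoin]

lemma CountsShiftedFlows.of_reroute (hne : eIn ≠ eOut) (hjoin : (edges eIn).2 = (edges eOut).1)
    {Q₁ Q₂ : ℚ≥0[X]} (h₁ : CountsShiftedFlows (rerouteOut edges eIn eOut) Q₁)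
    (h₂ : CountsShiftedFlows (rerouteIn edges eIn eOut) Q₂) :
    CountsShiftedFlows edges (Q₁ + Q₂) := by
  intro x hx
  obtain ⟨_, hc₁⟩ := h₁ x hx
  obtain ⟨_, hc₂⟩ := h₂ x hx
  let e := shiftedFlowEquivSum hne hjoin x
  refine ⟨Finite.of_equiv _ e, ?_⟩
  rw [← Nat.card_congr e, Nat.card_sum, Nat.cast_add, hc₁, hc₂, eval_add]

lemma countsShiftedFlows_rerouteOut_zero (hjoin : (edges eIn).2 = (edges eOut).1)
    (hout : ∀ v : Fin (n + 1), (v : ℕ) < n → ∃ e, (edges e).1 = v)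
    (hdead : ¬ ∀ v : Fin (n + 1), (v : ℕ) < n → ∃ e, (rerouteOut edges eIn eOut e).1 = v) :
    CountsShiftedFlows (rerouteOut edges eIn eOut) 0 := by
  push Not at hdead
  obtain ⟨v, hv, hnout⟩ := hdead
  obtain ⟨e, he⟩ := hout v hv
  have heOut : e = eOut := by
    by_contra h
    exact hnout e (by rw [rerouteOut_fst_of_ne h, he])
  refine countsShiftedFlows_zero hv ⟨eIn, ?_⟩ hnout
  rw [rerouteOut_snd, hjoin, ← heOut, he]

lemma potential_update_lt (edges : ι → Fin (n + 1) × Fin (n + 1)) {e₀ : ι}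
    {p : Fin (n + 1) × Fin (n + 1)}
    (h : (p.1 + (n - p.2) : ℕ) < (edges e₀).1 + (n - (edges e₀).2)) :
    potential (Function.update edges e₀ p) < potential edges := by
  refine Finset.sum_lt_sum (fun e _ => ?_) ⟨e₀, mem_univ _, by simpa⟩
  rcases eq_or_ne e e₀ with rfl | he
  · simpa using h.le
  · simp [Function.update_of_ne he]

lemma potential_rerouteIn_lt (hdir : ∀ e, (edges e).1 < (edges e).2)
    (hjoin : (edges eIn).2 = (edges eOut).1) :
    potential (rerouteIn edges eIn eOut) < potential edges := by
  have h₁ : ((edges eIn).2 : ℕ) < (edges eOut).2 := hjoin ▸ hdir eOut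
  have h₂ := (edges eOut).2.is_le
  exact potential_update_lt edges (by dsimp only; omega)

lemma potential_rerouteOut_lt (hdir : ∀ e, (edges e).1 < (edges e).2)
    (hjoin : (edges eIn).2 = (edges eOut).1) :
    potential (rerouteOut edges eIn eOut) < potential edges := by
  have h : ((edges eIn).1 : ℕ) < (edges eOut).1 := hjoin ▸ hdir eIn
  exact potential_update_lt edges (by dsimp only; omega)

end RerouteFlows

section Base

variable {edges : ι → Fin (n + 1) × Fin (n + 1)} {f : ι → Fin n}

lemma isShiftedFlow_iff_of_heads_eq_last (hsink : ∀ e, (edges e).2 = Fin.last n)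
    (hf : ∀ e, (edges e).1 = (f e).castSucc) {x : ℕ} (hx : 0 < x) (b : ι → ℕ) :
    IsShiftedFlow edges x b ↔ ∀ v, ∑ e with f e = v, b e = x - 1 := by
  have hnet (v : Fin n) :
      shiftedNetFlow edges b v.castSucc = ((∑ e with f e = v, b e : ℕ) : ℤ) := by
    rw [Nat.cast_sum, Finset.sum_filter]
    refine Finset.sum_congr rfl fun e _ => ?_
    simp [edgeNetFlow, hsink e, hf e, (Fin.castSucc_lt_last v).ne', Fin.castSucc_inj]
  simp only [IsShiftedFlow, Fin.forall_fin_succ', Fin.val_castSucc, Fin.is_lt, forall_const,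
    Fin.val_last, lt_irrefl, IsEmpty.forall_iff, and_true, hnet]
  exact forall_congr' fun v => by omega

lemma card_shiftedFlow_of_heads_eq_last [DecidableEq ι]
    (hsink : ∀ e, (edges e).2 = Fin.last n) (hf : ∀ e, (edges e).1 = (f e).castSucc)
    {x : ℕ} (hx : 0 < x) :
    Finite {b // IsShiftedFlow edges x b} ∧
      Nat.card {b // IsShiftedFlow edges x b} = ∏ v, Nat.multichoose #{e | f e = v} (x - 1) := by
  let e := (Equiv.subtypeEquivRight (isShiftedFlow_iff_of_heads_eq_last hsink hf hx)).trans
    (fiberwiseSumEquiv f (x - 1))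
  refine ⟨Finite.of_equiv _ e.symm, ?_⟩
  rw [Nat.card_congr e, Nat.card_pi]
  simp [Nat.card_eq_fintype_card, Sym.card_sym_eq_multichoose, Fintype.card_subtype]

theorem exists_countsShiftedFlows_of_heads_eq_last [DecidableEq ι]
    (hdir : ∀ e, (edges e).1 < (edges e).2)
    (hout : ∀ v : Fin (n + 1), (v : ℕ) < n → ∃ e, (edges e).1 = v)
    (hsink : ∀ e, (edges e).2 = Fin.last n) :
    ∃ Q : ℚ≥0[X], Q.degree = ↑(Fintype.card ι - n) ∧ CountsShiftedFlows edges Q := by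
  set f : ι → Fin n := fun e => (edges e).1.castPred (Fin.ne_last_of_lt (hsink e ▸ hdir e))
  have hf (e : ι) : (edges e).1 = (f e).castSucc := (Fin.castSucc_castPred _ _).symm
  set d : Fin n → ℕ := fun v => #{e | f e = v}
  have hd (v : Fin n) : 1 ≤ d v := by
    obtain ⟨e, he⟩ := hout v.castSucc v.is_lt
    exact Finset.card_pos.2 ⟨e, by simpa [hf, Fin.castSucc_inj] using he⟩
  have hsum : ∑ v, d v = Fintype.card ι :=
    (Finset.card_eq_sum_card_fiberwise fun _ _ => mem_univ _).symm
  refine ⟨∏ v, multichoosePoly (d v - 1), ?_, fun x hx => ?_⟩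
  · rw [degree_prod]
    simp only [degree_multichoosePoly]
    rw [← Nat.cast_sum, Finset.sum_tsub_distrib _ fun v _ => hd v, hsum]
    simp
  · obtain ⟨hfin, hcard⟩ := card_shiftedFlow_of_heads_eq_last hsink hf hx
    refine ⟨hfin, ?_⟩
    rw [hcard, eval_prod, Nat.cast_prod]
    refine Finset.prod_congr rfl fun v _ => ?_
    have h := Nat.multichoose_succ_comm (d v - 1) (x - 1)
    rw [Nat.sub_add_cancel (hd v), Nat.sub_add_cancel hx] at h
    rw [eval_multichoosePoly, ← h]

end Base

theorem exists_countsShiftedFlows [DecidableEq ι] (edges : ι → Fin (n + 1) × Fin (n + 1))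
    (hdir : ∀ e, (edges e).1 < (edges e).2)
    (hout : ∀ v : Fin (n + 1), (v : ℕ) < n → ∃ e, (edges e).1 = v) :
    ∃ Q : ℚ≥0[X], Q.degree = ↑(Fintype.card ι - n) ∧ CountsShiftedFlows edges Q := by
  by_cases hsink : ∀ e, (edges e).2 = Fin.last n
  · exact exists_countsShiftedFlows_of_heads_eq_last hdir hout hsink
  push Not at hsink
  obtain ⟨eIn, hIn⟩ := hsink
  obtain ⟨eOut, hOut⟩ := hout _ (Fin.val_lt_last hIn)
  have hjoin : (edges eIn).2 = (edges eOut).1 := hOut.symm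
  have hne : eIn ≠ eOut := by rintro rfl; exact (hdir eIn).ne' hjoin
  have hdecIn := potential_rerouteIn_lt hdir hjoin
  have hdecOut := potential_rerouteOut_lt hdir hjoin
  obtain ⟨Q₂, hdeg₂, hQ₂⟩ := exists_countsShiftedFlows (rerouteIn edges eIn eOut)
    (fst_lt_snd_rerouteIn hdir hjoin) fun v hv => by
      simpa only [rerouteIn_fst] using hout v hv
  obtain ⟨Q₁, hdeg₁, hQ₁⟩ : ∃ Q₁ : ℚ≥0[X], Q₁.degree ≤ ↑(Fintype.card ι - n) ∧
      CountsShiftedFlows (rerouteOut edges eIn eOut) Q₁ := by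
    by_cases hout₁ :
        ∀ v : Fin (n + 1), (v : ℕ) < n → ∃ e, (rerouteOut edges eIn eOut e).1 = v
    · obtain ⟨Q₁, hdeg₁, hQ₁⟩ :=
        exists_countsShiftedFlows _ (fst_lt_snd_rerouteOut hdir hjoin) hout₁
      exact ⟨Q₁, hdeg₁.le, hQ₁⟩
    · exact ⟨0, by simp, countsShiftedFlows_rerouteOut_zero hjoin hout hout₁⟩
  exact ⟨Q₁ + Q₂, by rw [degree_add_eq_right_of_degree_le (hdeg₂ ▸ hdeg₁), hdeg₂],
    hQ₁.of_reroute hne hjoin hQ₂⟩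
termination_by potential edges

end FlowCount

theorem stmt18 (n m : ℕ)
    -- the edges of the directed multigraph `G` on vertex set `Fin (n+1)`
    (edges : Fin m → Fin (n + 1) × Fin (n + 1))
    -- each edge is directed from its smaller endpoint to its larger endpoint (no loops)
    (hdir : ∀ e, (edges e).1 < (edges e).2)
    -- each of the vertices `1,…,n` has out-degree at least 1
    (hout : ∀ v : Fin (n + 1), (v : ℕ) < n →
      1 ≤ (Finset.univ.filter fun e => (edges e).1 = v).card)
    -- `indeg v` is the in-degree of `v`, so the shifted in-degree is `u_v = indeg v - 1 : ℤ`
    (indeg : Fin (n + 1) → ℕ)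
    (hindeg : ∀ v, indeg v = (Finset.univ.filter fun e => (edges e).2 = v).card)
    -- `E x` counts the nonnegative integer flows on the edges of `G` whose net flow at
    -- each vertex `v ∈ {1,…,n}` is `x + u_v`
    (E : ℕ → ℕ)
    (hE : ∀ x : ℕ, E x = Nat.card {b : Fin m → ℕ //
      ∀ v : Fin (n + 1), (v : ℕ) < n →
        (∑ e ∈ Finset.univ.filter (fun e => (edges e).1 = v), (b e : ℤ)) -
        (∑ e ∈ Finset.univ.filter (fun e => (edges e).2 = v), (b e : ℤ)) =
        (x : ℤ) + ((indeg v : ℤ) - 1)}) :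
    ∃ P : Polynomial ℚ, P.degree = (m - n : ℕ) ∧ (∀ i, 0 ≤ P.coeff i) ∧
      ∀ x : ℕ, 0 < x → (E x : ℚ) = P.eval (x : ℚ) := by
  obtain ⟨Q, hdeg, hQ⟩ := FlowCount.exists_countsShiftedFlows edges hdir fun v hv => by
    simpa [Finset.card_pos, Finset.Nonempty] using hout v hv
  have hEQ (x : ℕ) (hx : 0 < x) : (E x : ℚ≥0) = Q.eval (x : ℚ≥0) := by
    rw [← (hQ x hx).2, hE x]
    exact congrArg _ <| Nat.card_congr <| Equiv.subtypeEquivRight fun b => by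
      rw [FlowCount.isShiftedFlow_iff]
      simp only [hindeg]
  refine ⟨Q.map (algebraMap ℚ≥0 ℚ), ?_, fun i => by simp [coeff_map], fun x hx => ?_⟩
  · rw [degree_map_eq_of_injective NNRat.coe_injective, hdeg, Fintype.card_fin]
  · rw [eval_natCast_map, ← hEQ x hx]
    simp
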